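/- arXiv:2203.16728 — 3 statements merged into one kernel-verified Lean document; each statement's English description precedes it below -/
import Mathlib

section
/- If φ : 𝔻 → 𝔻 is an analytic self-map of the open unit disk that has a fixed point λ ∈ 𝔻 with |φ'(λ)| < 1, then for every z ∈ 𝔻 the sequence of iterates φ^[n](z) converges to λ. -/
/-!
Conjugating `φ` by the disc automorphism `z ↦ (z - λ) / (1 - conj λ z)` moves the fixed point to
`0` without changing the multiplier. For a self-map `h` of the disc fixing `0`, the Schwarz lemma
gives `‖dslope h 0‖ ≤ 1`, and the maximum principle upgrades this to `< 1` since `dslope h 0 0 =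
h'(0)` has norm `< 1`. By compactness `h` is then a strict contraction towards `0` on every closed
disc of radius `r < 1`, and such a disc contains the whole orbit of any point of norm `≤ r`.
-/

open Metric Filter Topology Set Function ComplexConjugate

section Iterate

lemma map_iterate_of_semiconjOn {α β : Type*} {s : Set α} {f : α → α} {e : α → β} {g : β → β}
    (hs : MapsTo f s s) (he : ∀ x ∈ s, e (f x) = g (e x)) (n : ℕ) {x : α} (hx : x ∈ s) :
    e (f^[n] x) = g^[n] (e x) := by
  induction n with
  | zero => rfl
  | succ n ih => rw [iterate_succ_apply', iterate_succ_apply', he _ (hs.iterate n hx), ih]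

variable {E : Type*} [SeminormedAddGroup E] {f : E → E} {r c : ℝ}

lemma norm_iterate_le_pow_mul (hc₀ : 0 ≤ c) (hc₁ : c ≤ 1)
    (hf : ∀ w, ‖w‖ ≤ r → ‖f w‖ ≤ c * ‖w‖) {w : E} (hw : ‖w‖ ≤ r) (n : ℕ) :
    ‖f^[n] w‖ ≤ c ^ n * ‖w‖ := by
  induction n with
  | zero => simp
  | succ n ih =>
    have hn : ‖f^[n] w‖ ≤ r :=
      ih.trans <| (mul_le_of_le_one_left (norm_nonneg w) (pow_le_one₀ hc₀ hc₁)).trans hw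
    calc ‖f^[n + 1] w‖ = ‖f (f^[n] w)‖ := by rw [iterate_succ_apply']
      _ ≤ c * ‖f^[n] w‖ := hf _ hn
      _ ≤ c * (c ^ n * ‖w‖) := mul_le_mul_of_nonneg_left ih hc₀
      _ = c ^ (n + 1) * ‖w‖ := by ring

lemma tendsto_iterate_nhds_zero_of_norm_le_mul (hc₀ : 0 ≤ c) (hc₁ : c < 1)
    (hf : ∀ w, ‖w‖ ≤ r → ‖f w‖ ≤ c * ‖w‖) {w : E} (hw : ‖w‖ ≤ r) :
    Tendsto (fun n ↦ f^[n] w) atTop (𝓝 0) := by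
  refine squeeze_zero_norm (norm_iterate_le_pow_mul hc₀ hc₁.le hf hw) ?_
  simpa using (tendsto_pow_atTop_nhds_zero_of_lt_one hc₀ hc₁).mul_const ‖w‖

end Iterate

namespace Complex

lemma norm_lt_of_isPreconnected_of_forall_norm_le {E F : Type*} [NormedAddCommGroup E]
    [NormedSpace ℂ E] [NormedAddCommGroup F] [NormedSpace ℂ F] {f : E → F} {U : Set E} {C : ℝ}
    (hU : IsPreconnected U) (ho : IsOpen U) (hd : DifferentiableOn ℂ f U)
    (hle : ∀ z ∈ U, ‖f z‖ ≤ C) {z₀ : E} (hz₀ : z₀ ∈ U) (hlt : ‖f z₀‖ < C) {z : E} (hz : z ∈ U) :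
    ‖f z‖ < C := by
  refine (hle z hz).lt_of_ne fun hC ↦ hlt.ne ?_
  have hmax : IsMaxOn (norm ∘ f) U z := fun y hy ↦ by
    simpa only [mem_ofPred_eq, comp_apply, hC] using hle y hy
  rw [← hC]
  exact norm_eqOn_of_isPreconnected_of_isMaxOn hU ho hd hz hmax hz₀

section SchwarzStrict

variable {h : ℂ → ℂ} (hd : DifferentiableOn ℂ h (ball 0 1))
  (hmaps : MapsTo h (ball 0 1) (ball 0 1)) (h₀ : h 0 = 0) (hder : ‖deriv h 0‖ < 1)
include hd hmaps h₀ hder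

lemma norm_dslope_zero_lt_one {z : ℂ} (hz : z ∈ ball 0 1) : ‖dslope h 0 z‖ < 1 := by
  have hmaps' : MapsTo h (ball 0 1) (closedBall (h 0) 1) := by
    rw [h₀]; exact hmaps.mono_right ball_subset_closedBall
  have hle : ∀ w ∈ ball (0 : ℂ) 1, ‖dslope h 0 w‖ ≤ 1 := fun w hw ↦ by
    simpa using norm_dslope_le_div_of_mapsTo_ball hd hmaps' hw
  refine norm_lt_of_isPreconnected_of_forall_norm_le (convex_ball 0 1).isPreconnected isOpen_ball
    ((differentiableOn_dslope (isOpen_ball.mem_nhds (mem_ball_self one_pos))).2 hd) hle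
    (mem_ball_self one_pos) ?_ hz
  rwa [dslope_same]

lemma exists_lt_one_forall_norm_le_mul_norm {r : ℝ} (hr₀ : 0 ≤ r) (hr₁ : r < 1) :
    ∃ c, 0 ≤ c ∧ c < 1 ∧ ∀ w, ‖w‖ ≤ r → ‖h w‖ ≤ c * ‖w‖ := by
  have hsub : closedBall (0 : ℂ) r ⊆ ball 0 1 := closedBall_subset_ball hr₁
  have hcont : ContinuousOn (fun w ↦ ‖dslope h 0 w‖) (closedBall 0 r) :=
    ((differentiableOn_dslope (isOpen_ball.mem_nhds (mem_ball_self one_pos))).2 hd).continuousOn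
      |>.mono hsub |>.norm
  obtain ⟨w₀, hw₀, hmax⟩ :=
    (isCompact_closedBall (0 : ℂ) r).exists_isMaxOn (nonempty_closedBall.2 hr₀) hcont
  refine ⟨‖dslope h 0 w₀‖, norm_nonneg _,
    norm_dslope_zero_lt_one hd hmaps h₀ hder (hsub hw₀), fun w hw ↦ ?_⟩
  have hslope : h w = w * dslope h 0 w := by simpa [h₀] using (sub_smul_dslope h 0 w).symm
  rw [hslope, norm_mul, mul_comm]
  exact mul_le_mul_of_nonneg_right (hmax (mem_closedBall_zero_iff.2 hw)) (norm_nonneg w)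

theorem tendsto_iterate_nhds_zero_of_norm_deriv_lt_one {w : ℂ} (hw : w ∈ ball 0 1) :
    Tendsto (fun n ↦ h^[n] w) atTop (𝓝 0) := by
  obtain ⟨c, hc₀, hc₁, hc⟩ :=
    exists_lt_one_forall_norm_le_mul_norm hd hmaps h₀ hder (norm_nonneg w) (mem_ball_zero_iff.1 hw)
  exact tendsto_iterate_nhds_zero_of_norm_le_mul hc₀ hc₁ hc le_rfl

end SchwarzStrict

section Mobius

/-- The automorphism of the unit disc sending `a` to `0`. -/
noncomputable def mobius (a z : ℂ) : ℂ := (z - a) / (1 - conj a * z)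

variable {a z : ℂ}

@[simp] lemma mobius_self (a : ℂ) : mobius a a = 0 := by simp [mobius]

@[simp] lemma mobius_neg_zero (a : ℂ) : mobius (-a) 0 = a := by simp [mobius]

lemma sq_norm_one_sub_conj_mul_sub_sq_norm_sub (a z : ℂ) :
    ‖1 - conj a * z‖ ^ 2 - ‖z - a‖ ^ 2 = (1 - ‖a‖ ^ 2) * (1 - ‖z‖ ^ 2) := by
  simp only [← normSq_eq_norm_sq, normSq_apply, sub_re, sub_im, mul_re, mul_im, conj_re, conj_im,
    one_re, one_im]
  ring

lemma one_sub_conj_mul_ne_zero (ha : ‖a‖ < 1) (hz : ‖z‖ ≤ 1) : 1 - conj a * z ≠ 0 := by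
  have : ‖conj a * z‖ < 1 := by
    rw [norm_mul, RCLike.norm_conj]
    nlinarith [norm_nonneg a, norm_nonneg z]
  rw [sub_ne_zero]
  rintro h
  simp [← h] at this

lemma norm_mobius_lt_one (ha : ‖a‖ < 1) (hz : ‖z‖ < 1) : ‖mobius a z‖ < 1 := by
  rw [mobius, norm_div, div_lt_one (norm_pos_iff.2 (one_sub_conj_mul_ne_zero ha hz.le))]
  have key := sq_norm_one_sub_conj_mul_sub_sq_norm_sub a z
  have hpos : 0 < (1 - ‖a‖ ^ 2) * (1 - ‖z‖ ^ 2) := by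
    apply mul_pos <;> nlinarith [norm_nonneg a, norm_nonneg z]
  exact lt_of_pow_lt_pow_left₀ 2 (norm_nonneg _) (by linarith)

lemma mapsTo_mobius (ha : ‖a‖ < 1) : MapsTo (mobius a) (ball 0 1) (ball 0 1) := fun _ hz ↦
  mem_ball_zero_iff.2 (norm_mobius_lt_one ha (mem_ball_zero_iff.1 hz))

lemma mobius_neg_mobius (ha : ‖a‖ < 1) (hz : ‖z‖ ≤ 1) : mobius (-a) (mobius a z) = z := by
  have hd := one_sub_conj_mul_ne_zero ha hz
  have hd' : 1 - z * conj a ≠ 0 := by rwa [mul_comm]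
  have haa' : 1 - a * conj a ≠ 0 := by rw [mul_comm]; exact one_sub_conj_mul_ne_zero ha ha.le
  have hden : 1 - conj (-a) * mobius a z = (1 - conj a * a) / (1 - conj a * z) := by
    rw [mobius, map_neg]
    field_simp
    ring
  rw [mobius, hden, mobius]
  field_simp
  ring

lemma hasDerivAt_mobius (hz : 1 - conj a * z ≠ 0) :
    HasDerivAt (mobius a) ((1 - conj a * a) / (1 - conj a * z) ^ 2) z := by
  have hden : HasDerivAt (fun w ↦ 1 - conj a * w) (-conj a) z := by
    simpa using ((hasDerivAt_id z).const_mul (conj a)).const_sub 1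
  have hnum : HasDerivAt (fun w ↦ w - a) 1 z := (hasDerivAt_id z).sub_const a
  exact (hnum.div hden hz).congr_deriv (by ring)

lemma differentiableOn_mobius (ha : ‖a‖ < 1) : DifferentiableOn ℂ (mobius a) (ball 0 1) :=
  fun _ hz ↦ (hasDerivAt_mobius (one_sub_conj_mul_ne_zero ha
    (mem_ball_zero_iff.1 hz).le)).differentiableAt.differentiableWithinAt

lemma continuousAt_mobius_zero (a : ℂ) : ContinuousAt (mobius a) 0 :=
  (hasDerivAt_mobius (by simp)).continuousAt

end Mobius

section Conjugation

noncomputable def mobiusConj (a : ℂ) (φ : ℂ → ℂ) : ℂ → ℂ := mobius a ∘ φ ∘ mobius (-a)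

variable {a : ℂ} {φ : ℂ → ℂ}

lemma mapsTo_mobiusConj (ha : ‖a‖ < 1) (hmaps : MapsTo φ (ball 0 1) (ball 0 1)) :
    MapsTo (mobiusConj a φ) (ball 0 1) (ball 0 1) :=
  (mapsTo_mobius ha).comp (hmaps.comp (mapsTo_mobius (norm_neg a ▸ ha)))

lemma differentiableOn_mobiusConj (ha : ‖a‖ < 1) (hφ : DifferentiableOn ℂ φ (ball 0 1))
    (hmaps : MapsTo φ (ball 0 1) (ball 0 1)) :
    DifferentiableOn ℂ (mobiusConj a φ) (ball 0 1) :=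
  have hna : ‖-a‖ < 1 := norm_neg a ▸ ha
  (differentiableOn_mobius ha).comp (hφ.comp (differentiableOn_mobius hna) (mapsTo_mobius hna))
    (hmaps.comp (mapsTo_mobius hna))

lemma mobiusConj_zero (hfix : φ a = a) : mobiusConj a φ 0 = 0 := by
  simp [mobiusConj, hfix]

lemma deriv_mobiusConj_zero (ha : ‖a‖ < 1) (hφ : DifferentiableAt ℂ φ a) (hfix : φ a = a) :
    deriv (mobiusConj a φ) 0 = deriv φ a := by
  have haa := one_sub_conj_mul_ne_zero ha ha.le
  have hout : HasDerivAt (mobius a) ((1 - conj a * a) / (1 - conj a * a) ^ 2)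
      (φ (mobius (-a) 0)) := by
    rw [mobius_neg_zero, hfix]
    exact hasDerivAt_mobius haa
  have hin : HasDerivAt (mobius (-a)) ((1 - conj (-a) * -a) / (1 - conj (-a) * 0) ^ 2) 0 :=
    hasDerivAt_mobius (by simp)
  have hmid : HasDerivAt φ (deriv φ a) (mobius (-a) 0) := by
    rw [mobius_neg_zero]
    exact hφ.hasDerivAt
  rw [mobiusConj, (hout.comp 0 (hmid.comp 0 hin)).deriv, map_neg, neg_mul_neg]
  field_simp
  simp

lemma mobius_iterate_eq_iterate_mobiusConj (ha : ‖a‖ < 1) (hmaps : MapsTo φ (ball 0 1) (ball 0 1))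
    (n : ℕ) {z : ℂ} (hz : z ∈ ball 0 1) : mobius a (φ^[n] z) = (mobiusConj a φ)^[n] (mobius a z) :=
  map_iterate_of_semiconjOn hmaps (fun x hx ↦ by
    simp only [mobiusConj, comp_apply, mobius_neg_mobius ha (mem_ball_zero_iff.1 hx).le]) n hz

end Conjugation

end Complex

open Complex

/-- If φ : 𝔻 → 𝔻 is analytic with a fixed point λ ∈ 𝔻 and |φ'(λ)| < 1, then
the iterates φ^[n](z) converge to λ for every z ∈ 𝔻. -/
theorem iterates_tendsto_of_attracting_fixed_point
    (φ : ℂ → ℂ)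
    (hφ : DifferentiableOn ℂ φ (ball (0:ℂ) 1))
    (hmaps : Set.MapsTo φ (ball (0:ℂ) 1) (ball (0:ℂ) 1))
    (lam : ℂ) (hlam : lam ∈ ball (0:ℂ) 1)
    (hfix : φ lam = lam)
    (hderiv : ‖deriv φ lam‖ < 1) :
    ∀ z ∈ ball (0:ℂ) 1, Tendsto (fun n => φ^[n] z) atTop (𝓝 lam) := by
  intro z hz
  have ha : ‖lam‖ < 1 := mem_ball_zero_iff.1 hlam
  have hconj : Tendsto (fun n ↦ (mobiusConj lam φ)^[n] (mobius lam z)) atTop (𝓝 0) :=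
    tendsto_iterate_nhds_zero_of_norm_deriv_lt_one (differentiableOn_mobiusConj ha hφ hmaps)
      (mapsTo_mobiusConj ha hmaps) (mobiusConj_zero hfix)
      (by rwa [deriv_mobiusConj_zero ha (hφ.differentiableAt (isOpen_ball.mem_nhds hlam)) hfix])
      (mapsTo_mobius ha hz)
  have hback : Tendsto (mobius (-lam)) (𝓝 0) (𝓝 lam) := by
    simpa using (continuousAt_mobius_zero (-lam)).tendsto
  refine (hback.comp hconj).congr fun n ↦ ?_
  rw [comp_apply, ← mobius_iterate_eq_iterate_mobiusConj ha hmaps n hz,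
    mobius_neg_mobius ha (mem_ball_zero_iff.1 (hmaps.iterate n hz)).le]
end

section
/- Continuity of the Denjoy–Wolff point (Heins): if φₙ : 𝔻 → 𝔻 are analytic self-maps converging pointwise to an analytic φ : 𝔻 → 𝔻 which is not the identity map, then the Denjoy–Wolff points λ_{φₙ} converge to λ_φ in the closed disk. -/
open Metric Filter Topology

/-- `IsDWPoint ψ lam` means `lam` is the (generalized) Denjoy–Wolff point of the analytic
self-map `ψ` of the unit disk: either a fixed point in 𝔻, or a unimodular constant value,
or the boundary attracting point of the iterates. -/
def IsDWPoint (ψ : ℂ → ℂ) (lam : ℂ) : Prop :=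
  (lam ∈ ball (0:ℂ) 1 ∧ ψ lam = lam) ∨
  (lam ∈ sphere (0:ℂ) 1 ∧ ∀ z ∈ ball (0:ℂ) 1, ψ z = lam) ∨
  (lam ∈ sphere (0:ℂ) 1 ∧
    ∀ z ∈ ball (0:ℂ) 1, Tendsto (fun n => ψ^[n] z) atTop (𝓝 lam))

/-!
Put `horoFun μ z = ‖1 - conj μ * z‖ ^ 2 / (1 - ‖z‖ ^ 2)`. By Schwarz–Pick (interior
Denjoy–Wolff point) or Julia's lemma (boundary Denjoy–Wolff point), every holomorphic self-map `f`
of the disc satisfies `horoFun λ (f z) ≤ horoFun λ z` at its Denjoy–Wolff point `λ`. This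
inequality survives pointwise limits, so `φ` satisfies it at every cluster point `μ` of `λₙ`.
Conversely, for `φ ≠ id` it pins down `λ_φ`. If `λ_φ` is an interior fixed point, then an interior
`μ` is a second fixed point, and a boundary `μ` forces one on the radius towards `μ` (after moving
`λ_φ` to `0`, Schwarz's lemma and the horodisc at `μ` touch only along that radius); two fixed
points make `φ` the identity. If `λ_φ` is on the circle, `horoFun μ (φ^[n] 0) ≤ horoFun μ 0 = 1`
while `φ^[n] 0 → λ_φ` forces `μ = λ_φ`. Compactness of the closed disc concludes.
-/

open Set ComplexConjugate

local notation "𝔻" => ball (0 : ℂ) 1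

noncomputable section

def IsDiscSelfMap (f : ℂ → ℂ) : Prop :=
  DifferentiableOn ℂ f 𝔻 ∧ MapsTo f 𝔻 𝔻

theorem IsDiscSelfMap.comp {f g : ℂ → ℂ} (hf : IsDiscSelfMap f) (hg : IsDiscSelfMap g) :
    IsDiscSelfMap (f ∘ g) :=
  ⟨hf.1.comp hg.1 hg.2, hf.2.comp hg.2⟩

theorem IsDiscSelfMap.norm_le_of_map_zero {f : ℂ → ℂ} (hf : IsDiscSelfMap f) (h0 : f 0 = 0)
    {z : ℂ} (hz : z ∈ 𝔻) : ‖f z‖ ≤ ‖z‖ :=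
  Complex.norm_le_norm_of_mapsTo_ball hf.1 (hf.2.mono_right ball_subset_closedBall) h0
    (mem_ball_zero_iff.1 hz)

theorem IsDiscSelfMap.eqOn_id_of_map_zero_of_map_eq {g : ℂ → ℂ} (hg : IsDiscSelfMap g)
    (h0 : g 0 = 0) {p : ℂ} (hp : p ∈ 𝔻) (hp0 : p ≠ 0) (hgp : g p = p) : EqOn g id 𝔻 := by
  have hslope : dslope g 0 p = 1 := by
    rw [dslope_of_ne _ hp0, slope_def_field, hgp, h0, sub_zero, div_self hp0]
  have haff := Complex.affine_of_mapsTo_ball_of_norm_dslope_eq_div hg.1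
    (by simpa [h0] using hg.2.mono_right ball_subset_closedBall) hp (by simp [hslope])
  intro z hz
  simpa [h0, hslope] using haff hz

theorem one_sub_conj_mul_ne_zero {a z : ℂ} (h : ‖a‖ * ‖z‖ < 1) : 1 - conj a * z ≠ 0 := by
  intro h1
  have := congrArg norm (sub_eq_zero.1 h1)
  rw [norm_one, norm_mul, Complex.norm_conj] at this
  linarith

theorem sq_norm_one_sub_conj_mul (a z : ℂ) :
    ‖1 - conj a * z‖ ^ 2 = ‖a - z‖ ^ 2 + (1 - ‖a‖ ^ 2) * (1 - ‖z‖ ^ 2) := by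
  simp only [Complex.sq_norm, Complex.normSq_apply, Complex.sub_re, Complex.sub_im,
    Complex.mul_re, Complex.mul_im, Complex.one_re, Complex.one_im, Complex.conj_re,
    Complex.conj_im]
  ring

def mobius (a z : ℂ) : ℂ := (a - z) / (1 - conj a * z)

@[simp] theorem mobius_self (a : ℂ) : mobius a a = 0 := by simp [mobius]

@[simp] theorem mobius_zero (a : ℂ) : mobius a 0 = a := by simp [mobius]

theorem one_sub_sq_norm_mobius {a z : ℂ} (ha : ‖a‖ < 1) (hz : ‖z‖ ≤ 1) :
    1 - ‖mobius a z‖ ^ 2 = (1 - ‖a‖ ^ 2) * (1 - ‖z‖ ^ 2) / ‖1 - conj a * z‖ ^ 2 := by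
  have hd : ‖1 - conj a * z‖ ≠ 0 :=
    norm_ne_zero_iff.2 (one_sub_conj_mul_ne_zero (mul_lt_one_of_nonneg_of_lt_one_left
      (norm_nonneg a) ha hz))
  rw [mobius, norm_div, div_pow, one_sub_div (pow_ne_zero 2 hd), sq_norm_one_sub_conj_mul]
  ring

theorem norm_mobius_lt_one {a z : ℂ} (ha : ‖a‖ < 1) (hz : ‖z‖ < 1) : ‖mobius a z‖ < 1 := by
  have h := one_sub_sq_norm_mobius ha hz.le
  have : 0 < (1 - ‖a‖ ^ 2) * (1 - ‖z‖ ^ 2) / ‖1 - conj a * z‖ ^ 2 :=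
    div_pos (mul_pos (by nlinarith [norm_nonneg a]) (by nlinarith [norm_nonneg z]))
      (pow_pos (norm_pos_iff.2 (one_sub_conj_mul_ne_zero
        (mul_lt_one_of_nonneg_of_lt_one_left (norm_nonneg a) ha hz.le))) 2)
  nlinarith [norm_nonneg (mobius a z)]

theorem norm_mobius_eq_one {a z : ℂ} (ha : ‖a‖ < 1) (hz : ‖z‖ = 1) : ‖mobius a z‖ = 1 := by
  have h := one_sub_sq_norm_mobius ha hz.le
  rw [hz, one_pow, sub_self, mul_zero, zero_div, sub_eq_zero] at h
  nlinarith [norm_nonneg (mobius a z)]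

theorem mobius_mobius {a z : ℂ} (ha : ‖a‖ < 1) (hz : ‖z‖ ≤ 1) : mobius a (mobius a z) = z := by
  have hd : 1 - conj a * z ≠ 0 :=
    one_sub_conj_mul_ne_zero (mul_lt_one_of_nonneg_of_lt_one_left (norm_nonneg a) ha hz)
  have ha' : 1 - conj a * a ≠ 0 :=
    one_sub_conj_mul_ne_zero (mul_lt_one_of_nonneg_of_lt_one_left (norm_nonneg a) ha ha.le)
  have hden : 1 - conj a * mobius a z = (1 - conj a * a) / (1 - conj a * z) := by
    rw [mobius, eq_div_iff hd, sub_mul, mul_assoc, div_mul_cancel₀ _ hd]; ring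
  have hnum : a - mobius a z = z * (1 - conj a * a) / (1 - conj a * z) := by
    rw [mobius, eq_div_iff hd, sub_mul, div_mul_cancel₀ _ hd]; ring
  rw [mobius, hden, hnum, div_div_div_cancel_right₀ hd, mul_div_cancel_right₀ _ ha']

theorem mobius_injOn {a : ℂ} (ha : ‖a‖ < 1) : InjOn (mobius a) (closedBall 0 1) :=
  fun z hz w hw h => by
    rw [← mobius_mobius ha (mem_closedBall_zero_iff.1 hz), h,
      mobius_mobius ha (mem_closedBall_zero_iff.1 hw)]

theorem isDiscSelfMap_mobius {a : ℂ} (ha : ‖a‖ < 1) : IsDiscSelfMap (mobius a) := by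
  refine ⟨?_, fun z hz => ?_⟩
  · refine ((differentiableOn_const a).sub differentiableOn_id).div
      ((differentiableOn_const 1).sub (differentiableOn_id.const_mul _)) fun z hz => ?_
    exact one_sub_conj_mul_ne_zero (mul_lt_one_of_nonneg_of_lt_one_left (norm_nonneg a) ha
      (mem_ball_zero_iff.1 hz).le)
  · exact mem_ball_zero_iff.2 (norm_mobius_lt_one ha (mem_ball_zero_iff.1 hz))

theorem one_sub_conj_mobius_mul_mobius {a w z : ℂ} (hw : 1 - conj a * w ≠ 0)
    (hz : 1 - conj a * z ≠ 0) :
    1 - conj (mobius a w) * mobius a z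
      = (1 - conj a * a) * (1 - conj w * z) / (conj (1 - conj a * w) * (1 - conj a * z)) := by
  have hw' : conj (1 - conj a * w) ≠ 0 := (map_ne_zero _).2 hw
  rw [mobius, mobius, map_div₀, div_mul_div_comm, one_sub_div (mul_ne_zero hw' hz)]
  congr 1
  simp only [map_sub, map_mul, map_one, Complex.conj_conj]
  ring

theorem IsDiscSelfMap.mobius_conj {φ : ℂ → ℂ} (hφ : IsDiscSelfMap φ) {L : ℂ} (hL : ‖L‖ < 1) :
    IsDiscSelfMap (mobius L ∘ φ ∘ mobius L) :=
  (isDiscSelfMap_mobius hL).comp (hφ.comp (isDiscSelfMap_mobius hL))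

theorem mobius_conj_apply_mobius (φ : ℂ → ℂ) {L z : ℂ} (hL : ‖L‖ < 1) (hz : ‖z‖ ≤ 1) :
    (mobius L ∘ φ ∘ mobius L) (mobius L z) = mobius L (φ z) := by
  simp [mobius_mobius hL hz]

theorem IsDiscSelfMap.norm_mobius_map_le {f : ℂ → ℂ} (hf : IsDiscSelfMap f) {a b : ℂ}
    (ha : a ∈ 𝔻) (hb : b ∈ 𝔻) : ‖mobius (f b) (f a)‖ ≤ ‖mobius b a‖ := by
  have hb' := mem_ball_zero_iff.1 hb
  have hh := ((isDiscSelfMap_mobius (mem_ball_zero_iff.1 (hf.2 hb))).comp hf).comp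
    (isDiscSelfMap_mobius hb')
  have key := hh.norm_le_of_map_zero (by simp) ((isDiscSelfMap_mobius hb').2 ha)
  simpa only [Function.comp_apply, mobius_mobius hb' (mem_ball_zero_iff.1 ha).le] using key

theorem IsDiscSelfMap.eqOn_id_of_two_fixed {φ : ℂ → ℂ} (hφ : IsDiscSelfMap φ) {L p : ℂ}
    (hL : L ∈ 𝔻) (hφL : φ L = L) (hp : p ∈ 𝔻) (hpL : p ≠ L) (hφp : φ p = p) : EqOn φ id 𝔻 := by
  have hL' := mem_ball_zero_iff.1 hL
  have hconj : ∀ z ∈ 𝔻, (mobius L ∘ φ ∘ mobius L) (mobius L z) = mobius L (φ z) :=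
    fun z hz => mobius_conj_apply_mobius φ hL' (mem_ball_zero_iff.1 hz).le
  have hid := (hφ.mobius_conj hL').eqOn_id_of_map_zero_of_map_eq (by simp [hφL])
    ((isDiscSelfMap_mobius hL').2 hp)
    (fun h => hpL (mobius_injOn hL' (ball_subset_closedBall hp) (ball_subset_closedBall hL)
      (by simpa using h)))
    (by rw [hconj p hp, hφp])
  intro z hz
  have := hid ((isDiscSelfMap_mobius hL').2 hz)
  rw [hconj z hz] at this
  exact mobius_injOn hL' (ball_subset_closedBall (hφ.2 hz)) (ball_subset_closedBall hz) this

/-- For `‖μ‖ = 1` the sublevel sets of `horoFun μ` are the horodiscs at `μ`; for `‖μ‖ < 1`,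
`horoFun μ z = (1 - ‖μ‖ ^ 2) / (1 - ρ ^ 2)` with `ρ` the pseudo-hyperbolic distance from `μ`
to `z`. -/
def horoFun (μ z : ℂ) : ℝ := ‖1 - conj μ * z‖ ^ 2 / (1 - ‖z‖ ^ 2)

@[simp] theorem horoFun_zero_right (μ : ℂ) : horoFun μ 0 = 1 := by simp [horoFun]

theorem horoFun_pos {μ z : ℂ} (hμ : ‖μ‖ ≤ 1) (hz : ‖z‖ < 1) : 0 < horoFun μ z :=
  div_pos (pow_pos (norm_pos_iff.2 (one_sub_conj_mul_ne_zero
    (mul_lt_one_of_nonneg_of_lt_one_right hμ (norm_nonneg z) hz))) 2)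
    (by nlinarith [norm_nonneg z])

theorem horoFun_eq_add {μ z : ℂ} (hz : ‖z‖ < 1) :
    horoFun μ z = ‖μ - z‖ ^ 2 / (1 - ‖z‖ ^ 2) + (1 - ‖μ‖ ^ 2) := by
  have : 1 - ‖z‖ ^ 2 ≠ 0 := by nlinarith [norm_nonneg z]
  rw [horoFun, sq_norm_one_sub_conj_mul]
  field_simp

theorem horoFun_mul_mul {c : ℂ} (hc : ‖c‖ = 1) (μ z : ℂ) :
    horoFun (c * μ) (c * z) = horoFun μ z := by
  have hcc : conj c * c = 1 := by rw [Complex.conj_mul', hc]; norm_num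
  rw [horoFun, horoFun, map_mul, mul_mul_mul_comm, hcc, one_mul, norm_mul, hc, one_mul]

theorem horoFun_mobius {L μ z : ℂ} (hL : ‖L‖ < 1) (hμ : ‖μ‖ ≤ 1) (hz : ‖z‖ < 1) :
    horoFun (mobius L μ) (mobius L z)
      = (1 - ‖L‖ ^ 2) / ‖1 - conj L * μ‖ ^ 2 * horoFun μ z := by
  have hdμ := one_sub_conj_mul_ne_zero (mul_lt_one_of_nonneg_of_lt_one_left (norm_nonneg L) hL hμ)
  have hdz := one_sub_conj_mul_ne_zero
    (mul_lt_one_of_nonneg_of_lt_one_left (norm_nonneg L) hL hz.le)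
  have hLL : ‖1 - conj L * L‖ = 1 - ‖L‖ ^ 2 := by
    rw [Complex.conj_mul', ← Complex.ofReal_pow, ← Complex.ofReal_one, ← Complex.ofReal_sub,
      Complex.norm_real, Real.norm_of_nonneg (by nlinarith [norm_nonneg L])]
  have hz2 : 1 - ‖z‖ ^ 2 ≠ 0 := by nlinarith [norm_nonneg z]
  have hL2 : 1 - ‖L‖ ^ 2 ≠ 0 := by nlinarith [norm_nonneg L]
  rw [horoFun, horoFun, one_sub_conj_mobius_mul_mobius hdμ hdz, one_sub_sq_norm_mobius hL hz.le,
    norm_div, norm_mul, norm_mul, Complex.norm_conj, hLL]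
  have hDμ := norm_ne_zero_iff.2 hdμ
  have hDz := norm_ne_zero_iff.2 hdz
  set Dμ := ‖1 - conj L * μ‖
  set Dz := ‖1 - conj L * z‖
  field_simp

theorem one_sub_sq_norm_mobius_eq_div_horoFun {μ z : ℂ} (hμ : ‖μ‖ < 1) (hz : ‖z‖ < 1) :
    1 - ‖mobius μ z‖ ^ 2 = (1 - ‖μ‖ ^ 2) / horoFun μ z := by
  rw [one_sub_sq_norm_mobius hμ hz.le, horoFun, div_div_eq_mul_div, mul_comm]

theorem tendsto_horoFun {μ z : ℂ} {ι : Type*} {l : Filter ι} {μs zs : ι → ℂ}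
    (hμ : Tendsto μs l (𝓝 μ)) (hz : Tendsto zs l (𝓝 z)) (hz1 : ‖z‖ < 1) :
    Tendsto (fun i => horoFun (μs i) (zs i)) l (𝓝 (horoFun μ z)) :=
  ((tendsto_const_nhds.sub ((Complex.continuous_conj.tendsto μ).comp hμ |>.mul hz)).norm.pow 2).div
    (tendsto_const_nhds.sub (hz.norm.pow 2)) (by nlinarith [norm_nonneg z])

theorem IsDiscSelfMap.horoFun_map_mul_le {f : ℂ → ℂ} (hf : IsDiscSelfMap f) {a b : ℂ}
    (ha : a ∈ 𝔻) (hb : b ∈ 𝔻) :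
    horoFun (f b) (f a) * (1 - ‖b‖ ^ 2) ≤ horoFun b a * (1 - ‖f b‖ ^ 2) := by
  have hsq : ‖mobius (f b) (f a)‖ ^ 2 ≤ ‖mobius b a‖ ^ 2 :=
    pow_le_pow_left₀ (norm_nonneg _) (hf.norm_mobius_map_le ha hb) 2
  have hfa := mem_ball_zero_iff.1 (hf.2 ha)
  have hfb := mem_ball_zero_iff.1 (hf.2 hb)
  rw [mem_ball_zero_iff] at ha hb
  have h := sub_le_sub_left hsq 1
  rw [one_sub_sq_norm_mobius_eq_div_horoFun hb ha,
    one_sub_sq_norm_mobius_eq_div_horoFun hfb hfa,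
    div_le_div_iff₀ (horoFun_pos hb.le ha) (horoFun_pos hfb.le hfa)] at h
  linarith

theorem frequently_le_succ_of_tendsto_of_lt {a : ℕ → ℝ} {c : ℝ} (hlt : ∀ n, a n < c)
    (ha : Tendsto a atTop (𝓝 c)) : ∃ᶠ n in atTop, a n ≤ a (n + 1) := by
  rw [frequently_atTop]
  intro M
  by_contra! h
  have hle : ∀ n ≥ M, a n ≤ a M :=
    fun n hn => Nat.le_induction le_rfl (fun k hk ih => (h k hk).le.trans ih) n hn
  exact (hlt M).not_ge (le_of_tendsto ha (eventually_atTop.2 ⟨M, hle⟩))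

theorem IsDWPoint.fixed_or_attracting {f : ℂ → ℂ} {l : ℂ} (h : IsDWPoint f l)
    (hf : MapsTo f 𝔻 𝔻) :
    (l ∈ 𝔻 ∧ f l = l) ∨ (‖l‖ = 1 ∧ Tendsto (fun n => f^[n] 0) atTop (𝓝 l)) := by
  have h0 : (0 : ℂ) ∈ 𝔻 := mem_ball_self one_pos
  rcases h with h | ⟨hl, hconst⟩ | ⟨hl, horb⟩
  · exact .inl h
  · have := hf h0
    rw [hconst 0 h0, mem_ball_zero_iff, ← mem_sphere_zero_iff_norm.1 hl] at this
    exact absurd this (lt_irrefl _)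
  · exact .inr ⟨mem_sphere_zero_iff_norm.1 hl, horb 0 h0⟩

/-- Julia's lemma at the limit of the orbit of `0`. -/
theorem IsDiscSelfMap.horoFun_map_le_of_tendsto_iterate {f : ℂ → ℂ} (hf : IsDiscSelfMap f)
    {l : ℂ} (hl : ‖l‖ = 1) (horb : Tendsto (fun n => f^[n] 0) atTop (𝓝 l)) {z : ℂ}
    (hz : z ∈ 𝔻) : horoFun l (f z) ≤ horoFun l z := by
  set zs : ℕ → ℂ := fun n => f^[n] 0
  have hzs : ∀ n, zs n ∈ 𝔻 := fun n => hf.2.iterate n (mem_ball_self one_pos)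
  have hnorm : ∀ n, ‖zs n‖ < 1 := fun n => mem_ball_zero_iff.1 (hzs n)
  -- Along the times where `‖zs n‖` does not decrease, Schwarz–Pick between `z` and `zs n`
  -- becomes the inequality we want, with `zs n` in place of `l`.
  have hfreq : ∃ᶠ n in atTop, ‖zs n‖ ≤ ‖zs (n + 1)‖ :=
    frequently_le_succ_of_tendsto_of_lt hnorm (by simpa [hl] using horb.norm)
  refine le_of_tendsto_of_tendsto_of_frequently
    (tendsto_horoFun (horb.comp (tendsto_add_atTop_nat 1)) tendsto_const_nhds
      (mem_ball_zero_iff.1 (hf.2 hz)))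
    (tendsto_horoFun horb tendsto_const_nhds (mem_ball_zero_iff.1 hz)) (hfreq.mono fun n hn => ?_)
  have hsp := hf.horoFun_map_mul_le hz (hzs n)
  have hsucc : f (zs n) = zs (n + 1) := (Function.iterate_succ_apply' f n 0).symm
  rw [hsucc] at hsp
  have hpos : 0 < 1 - ‖zs n‖ ^ 2 := by nlinarith [hnorm n, norm_nonneg (zs n)]
  have hK := (horoFun_pos (hnorm n).le (mem_ball_zero_iff.1 hz)).le
  refine le_of_mul_le_mul_right (hsp.trans (mul_le_mul_of_nonneg_left ?_ hK)) hpos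
  nlinarith [norm_nonneg (zs n)]

theorem IsDWPoint.horoFun_map_le {f : ℂ → ℂ} {l : ℂ} (h : IsDWPoint f l) (hf : IsDiscSelfMap f)
    {z : ℂ} (hz : z ∈ 𝔻) : horoFun l (f z) ≤ horoFun l z := by
  rcases h.fixed_or_attracting hf.2 with ⟨hl, hfix⟩ | ⟨hl, horb⟩
  · have hsp := hf.horoFun_map_mul_le hz hl
    rw [hfix] at hsp
    have hl' := mem_ball_zero_iff.1 hl
    exact le_of_mul_le_mul_right hsp (by nlinarith [norm_nonneg l])
  · exact hf.horoFun_map_le_of_tendsto_iterate hl horb hz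

theorem horoFun_map_le_of_tendsto {ι : Type*} {l : Filter ι} [l.NeBot] {fs : ι → ℂ → ℂ}
    {φ : ℂ → ℂ} {lam : ι → ℂ} {μ : ℂ} (hfs : ∀ i, IsDiscSelfMap (fs i)) (hφ : MapsTo φ 𝔻 𝔻)
    (hconv : ∀ z ∈ 𝔻, Tendsto (fun i => fs i z) l (𝓝 (φ z)))
    (hlam : ∀ᶠ i in l, IsDWPoint (fs i) (lam i)) (hμ : Tendsto lam l (𝓝 μ)) {z : ℂ}
    (hz : z ∈ 𝔻) : horoFun μ (φ z) ≤ horoFun μ z :=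
  le_of_tendsto_of_tendsto (tendsto_horoFun hμ (hconv z hz) (mem_ball_zero_iff.1 (hφ hz)))
    (tendsto_horoFun hμ tendsto_const_nhds (mem_ball_zero_iff.1 hz))
    (hlam.mono fun i hi => hi.horoFun_map_le (hfs i) hz)

theorem eq_of_horoFun_le_horoFun_self {μ w : ℂ} (hμ : ‖μ‖ < 1) (hw : ‖w‖ < 1)
    (h : horoFun μ w ≤ horoFun μ μ) : w = μ := by
  rw [horoFun_eq_add hw, horoFun_eq_add hμ, sub_self, norm_zero, zero_pow two_ne_zero, zero_div,
    zero_add, add_le_iff_nonpos_left, div_nonpos_iff] at h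
  have hw2 : 0 < 1 - ‖w‖ ^ 2 := by nlinarith [norm_nonneg w]
  have : ‖μ - w‖ ^ 2 ≤ 0 := by
    rcases h with ⟨-, h⟩ | ⟨h, -⟩
    · linarith
    · exact h
  exact (sub_eq_zero.1 (norm_eq_zero.1 (pow_eq_zero_iff two_ne_zero |>.1
    (le_antisymm this (sq_nonneg _))))).symm

theorem eq_of_horoFun_one_le {v : ℂ} {r : ℝ} (hr0 : 0 ≤ r) (hr1 : r < 1) (hv : ‖v‖ ≤ r)
    (h : horoFun 1 v ≤ horoFun 1 r) : v = r := by
  have hv2 : v.re ^ 2 + v.im ^ 2 ≤ r ^ 2 := by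
    rw [sq, sq, ← Complex.normSq_apply, ← Complex.sq_norm]
    exact pow_le_pow_left₀ (norm_nonneg v) hv 2
  simp only [horoFun, map_one, one_mul, Complex.sq_norm, Complex.normSq_apply, Complex.sub_re,
    Complex.sub_im, Complex.one_re, Complex.one_im, Complex.ofReal_re, Complex.ofReal_im] at h
  rw [div_le_div_iff₀ (by nlinarith) (by nlinarith)] at h
  set x := v.re
  set y := v.im
  have h' : ((1 - x) ^ 2 + y ^ 2) * (1 + r) ≤ (1 - r) * (1 - (x ^ 2 + y ^ 2)) := by
    have : (1 - r) * (((1 - x) ^ 2 + y ^ 2) * (1 + r) - (1 - r) * (1 - (x ^ 2 + y ^ 2))) ≤ 0 := by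
      nlinarith
    nlinarith
  have hsq : (1 + r) * ((x - r) ^ 2 + y ^ 2) ≤ 0 := by
    nlinarith [mul_nonneg (sub_nonneg.2 hr1.le) (sub_nonneg.2 hv2),
      mul_le_mul_of_nonneg_left h' hr0]
  have hx : x = r := by nlinarith [sq_nonneg (x - r), sq_nonneg y]
  have hy : y = 0 := by nlinarith [sq_nonneg (x - r), sq_nonneg y]
  exact Complex.ext (by simpa using hx) (by simpa using hy)

theorem IsDiscSelfMap.map_mul_eq_of_horoFun_map_le {g : ℂ → ℂ} (hg : IsDiscSelfMap g)
    (h0 : g 0 = 0) {μ : ℂ} (hμ : ‖μ‖ = 1) (hinv : ∀ z ∈ 𝔻, horoFun μ (g z) ≤ horoFun μ z)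
    {r : ℝ} (hr0 : 0 ≤ r) (hr1 : r < 1) : g (r * μ) = r * μ := by
  have hnorm : ‖(r : ℂ) * μ‖ = r := by
    rw [norm_mul, hμ, mul_one, Complex.norm_real, Real.norm_of_nonneg hr0]
  have hmem : (r : ℂ) * μ ∈ 𝔻 := mem_ball_zero_iff.2 (hnorm.symm ▸ hr1)
  have hμμ : conj μ * μ = 1 := by rw [Complex.conj_mul', hμ]; norm_num
  have hc : ‖conj μ‖ = 1 := by rw [Complex.norm_conj, hμ]
  have key : conj μ * g (r * μ) = r := by
    refine eq_of_horoFun_one_le hr0 hr1 ?_ ?_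
    · rw [norm_mul, hc, one_mul]
      exact (hg.norm_le_of_map_zero h0 hmem).trans hnorm.le
    · have := hinv _ hmem
      rwa [← horoFun_mul_mul hc, ← horoFun_mul_mul hc μ (r * μ), hμμ, mul_left_comm, hμμ,
        mul_one] at this
  calc g (r * μ) = μ * (conj μ * g (r * μ)) := by rw [← mul_assoc, mul_comm μ, hμμ, one_mul]
    _ = r * μ := by rw [key, mul_comm]

theorem horoFun_mobius_conj_le {φ : ℂ → ℂ} (hφ : MapsTo φ 𝔻 𝔻) {L μ : ℂ} (hL : ‖L‖ < 1)
    (hμ : ‖μ‖ ≤ 1) (hinv : ∀ z ∈ 𝔻, horoFun μ (φ z) ≤ horoFun μ z) {u : ℂ} (hu : u ∈ 𝔻) :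
    horoFun (mobius L μ) ((mobius L ∘ φ ∘ mobius L) u) ≤ horoFun (mobius L μ) u := by
  have hmu := (isDiscSelfMap_mobius hL).2 hu
  have hc : 0 ≤ (1 - ‖L‖ ^ 2) / ‖1 - conj L * μ‖ ^ 2 :=
    div_nonneg (by nlinarith [norm_nonneg L]) (sq_nonneg _)
  calc horoFun (mobius L μ) ((mobius L ∘ φ ∘ mobius L) u)
      = (1 - ‖L‖ ^ 2) / ‖1 - conj L * μ‖ ^ 2 * horoFun μ (φ (mobius L u)) :=
        horoFun_mobius hL hμ (mem_ball_zero_iff.1 (hφ hmu))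
    _ ≤ (1 - ‖L‖ ^ 2) / ‖1 - conj L * μ‖ ^ 2 * horoFun μ (mobius L u) :=
        mul_le_mul_of_nonneg_left (hinv _ hmu) hc
    _ = horoFun (mobius L μ) u := by
        rw [← horoFun_mobius hL hμ (mem_ball_zero_iff.1 hmu),
          mobius_mobius hL (mem_ball_zero_iff.1 hu).le]

theorem IsDiscSelfMap.exists_fixed_ne_of_horoFun_map_le {φ : ℂ → ℂ} (hφ : IsDiscSelfMap φ)
    {L μ : ℂ} (hL : L ∈ 𝔻) (hφL : φ L = L) (hμ : ‖μ‖ = 1)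
    (hinv : ∀ z ∈ 𝔻, horoFun μ (φ z) ≤ horoFun μ z) : ∃ p ∈ 𝔻, p ≠ L ∧ φ p = p := by
  have hL' := mem_ball_zero_iff.1 hL
  have hμ' : ‖mobius L μ‖ = 1 := norm_mobius_eq_one hL' hμ
  set q : ℂ := ((1 / 2 : ℝ) : ℂ) * mobius L μ
  have hq : ‖q‖ < 1 := by
    rw [norm_mul, hμ', Complex.norm_real]
    norm_num
  have hq0 : q ≠ 0 := mul_ne_zero (by norm_num) (norm_ne_zero_iff.1 (by simp [hμ']))
  have hgq : (mobius L ∘ φ ∘ mobius L) q = q :=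
    (hφ.mobius_conj hL').map_mul_eq_of_horoFun_map_le (by simp [hφL]) hμ'
      (fun u hu => horoFun_mobius_conj_le hφ.2 hL' hμ.le hinv hu) (by norm_num) (by norm_num)
  have hp := (isDiscSelfMap_mobius hL').2 (mem_ball_zero_iff.2 hq)
  refine ⟨mobius L q, hp, fun h => hq0 ?_, ?_⟩
  · rw [← mobius_mobius hL' hq.le, h, mobius_self]
  · apply mobius_injOn hL' (ball_subset_closedBall (hφ.2 hp)) (ball_subset_closedBall hp)
    rw [mobius_mobius hL' hq.le]
    exact hgq

theorem horoFun_iterate_le {φ : ℂ → ℂ} (hφ : MapsTo φ 𝔻 𝔻) {μ : ℂ}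
    (hinv : ∀ z ∈ 𝔻, horoFun μ (φ z) ≤ horoFun μ z) (n : ℕ) {z : ℂ} (hz : z ∈ 𝔻) :
    horoFun μ (φ^[n] z) ≤ horoFun μ z := by
  induction n with
  | zero => rfl
  | succ n ih =>
    rw [Function.iterate_succ_apply']
    exact (hinv _ (hφ.iterate n hz)).trans ih

theorem eq_of_tendsto_of_horoFun_le_one {u : ℕ → ℂ} {L μ : ℂ} (hu : Tendsto u atTop (𝓝 L))
    (hL : ‖L‖ = 1) (hu1 : ∀ n, ‖u n‖ < 1) (h : ∀ n, horoFun μ (u n) ≤ 1) : μ = L := by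
  have hle : ∀ n, ‖1 - conj μ * u n‖ ^ 2 ≤ 1 - ‖u n‖ ^ 2 := fun n =>
    (div_le_one (by nlinarith [hu1 n, norm_nonneg (u n)])).1 (h n)
  have hlim := le_of_tendsto_of_tendsto'
    ((tendsto_const_nhds.sub (tendsto_const_nhds.mul hu)).norm.pow 2)
    (tendsto_const_nhds.sub (hu.norm.pow 2)) hle
  rw [hL, one_pow, sub_self] at hlim
  have h1 : conj μ * L = 1 :=
    (sub_eq_zero.1 (norm_eq_zero.1 (pow_eq_zero_iff two_ne_zero |>.1
      (le_antisymm hlim (sq_nonneg _))))).symm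
  have hLL : conj L * L = 1 := by rw [Complex.conj_mul', hL]; norm_num
  have : conj μ = conj L := mul_right_cancel₀ (fun h0 => by simp [h0] at hLL) (h1.trans hLL.symm)
  simpa using congrArg conj this

theorem IsDWPoint.eq_of_horoFun_map_le {φ : ℂ → ℂ} {L μ : ℂ} (hdw : IsDWPoint φ L)
    (hφ : IsDiscSelfMap φ) (hne : ¬ EqOn φ id 𝔻) (hμ : ‖μ‖ ≤ 1)
    (hinv : ∀ z ∈ 𝔻, horoFun μ (φ z) ≤ horoFun μ z) : μ = L := by
  rcases hdw.fixed_or_attracting hφ.2 with ⟨hL, hφL⟩ | ⟨hL, horb⟩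
  · by_contra hμL
    obtain ⟨p, hp, hpL, hφp⟩ : ∃ p ∈ 𝔻, p ≠ L ∧ φ p = p := by
      rcases hμ.lt_or_eq with hμ | hμ
      · have hμ' := mem_ball_zero_iff.2 hμ
        exact ⟨μ, hμ', hμL, eq_of_horoFun_le_horoFun_self hμ (mem_ball_zero_iff.1 (hφ.2 hμ'))
          (hinv μ hμ')⟩
      · exact hφ.exists_fixed_ne_of_horoFun_map_le hL hφL hμ hinv
    exact hne (hφ.eqOn_id_of_two_fixed hL hφL hp hpL hφp)
  · have h0 : (0 : ℂ) ∈ 𝔻 := mem_ball_self one_pos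
    exact eq_of_tendsto_of_horoFun_le_one horb hL
      (fun n => mem_ball_zero_iff.1 (hφ.2.iterate n h0))
      (fun n => by simpa using horoFun_iterate_le hφ.2 hinv n h0)

theorem IsDWPoint.mem_closedBall {f : ℂ → ℂ} {l : ℂ} (h : IsDWPoint f l) :
    l ∈ closedBall (0 : ℂ) 1 := by
  rcases h with ⟨hl, -⟩ | ⟨hl, -⟩ | ⟨hl, -⟩
  · exact ball_subset_closedBall hl
  all_goals exact sphere_subset_closedBall hl

end

/-- Heins' theorem: if analytic self-maps φₙ of 𝔻 converge pointwise to an analytic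
φ : 𝔻 → 𝔻 which is not the identity, then the Denjoy–Wolff points of φₙ converge to
the Denjoy–Wolff point of φ. -/
theorem denjoy_wolff_points_converge
    (φseq : ℕ → ℂ → ℂ) (φ : ℂ → ℂ)
    (hφseq : ∀ n, DifferentiableOn ℂ (φseq n) (ball (0:ℂ) 1))
    (hmapsseq : ∀ n, Set.MapsTo (φseq n) (ball (0:ℂ) 1) (ball (0:ℂ) 1))
    (hφ : DifferentiableOn ℂ φ (ball (0:ℂ) 1))
    (hmaps : Set.MapsTo φ (ball (0:ℂ) 1) (ball (0:ℂ) 1))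
    (hconv : ∀ z ∈ ball (0:ℂ) 1, Tendsto (fun n => φseq n z) atTop (𝓝 (φ z)))
    (hne : ¬ ∀ z ∈ ball (0:ℂ) 1, φ z = z)
    (lam : ℕ → ℂ) (hlam : ∀ᶠ n in atTop, IsDWPoint (φseq n) (lam n))
    (lamφ : ℂ) (hlamφ : IsDWPoint φ lamφ) :
    Tendsto lam atTop (𝓝 lamφ) := by
  refine (isCompact_closedBall (0 : ℂ) 1).tendsto_nhds_of_unique_mapClusterPt
    (hlam.mono fun n hn => hn.mem_closedBall) fun μ hμ hcluster => ?_
  obtain ⟨ψ, hψ, hlimψ⟩ := hcluster.tendsto_subseq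
  have hinv : ∀ z ∈ 𝔻, horoFun μ (φ z) ≤ horoFun μ z := fun z hz =>
    horoFun_map_le_of_tendsto (fs := φseq ∘ ψ) (fun n => ⟨hφseq _, hmapsseq _⟩) hmaps
      (fun z hz => (hconv z hz).comp hψ.tendsto_atTop) (hψ.tendsto_atTop.eventually hlam)
      hlimψ hz
  exact hlamφ.eq_of_horoFun_map_le ⟨hφ, hmaps⟩ (fun h => hne fun z hz => h hz)
    (mem_closedBall_zero_iff.1 hμ) hinv
end

section
/- Let f(λ) = β + ∫_{(0,∞)} (1+t²)/(t(t−λ)) dσ(t) on Ω = ℂ \ [0,∞), with β ≥ 0 and σ a finite nonzero positive measure with ∫(1/t)dσ < ∞, and set η(λ) = λ f(λ). If (wₙ) ⊂ Ω tends to 0 with arguments arg wₙ converging in (0, 2π), then η(wₙ) → 0. -/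
/-!
Write `η(w) = β w + ∫ w (1 + t²) / (t (t - w)) dσ(t)`. The first term tends to `0` trivially.
Since the arguments of `wₙ` stay away from `0` and `2π`, eventually `Re wₙ ≤ κ |wₙ|` for some
`κ < 1`, and then `|t - wₙ| ≥ c (t + |wₙ|)` for all `t ≥ 0`. This bounds the integrand of the
second term by `(1/t + 1) / c`, which is `σ`-integrable, while the integrand tends to `0`
pointwise; dominated convergence finishes the proof.
-/

open MeasureTheory Complex Set Filter Topology

/-- The argument of `w` chosen continuously on the slit plane ℂ \ [0,∞), with values
in (0, 2π). -/
noncomputable def argSlit (w : ℂ) : ℝ :=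
  if 0 < Complex.arg w then Complex.arg w else Complex.arg w + 2 * Real.pi

noncomputable def stieltjesKernel (z : ℂ) (t : ℝ) : ℂ :=
  (1 + (t : ℂ) ^ 2) / ((t : ℂ) * ((t : ℂ) - z))

lemma cos_argSlit (z : ℂ) : Real.cos (argSlit z) = Real.cos (arg z) := by
  unfold argSlit
  split_ifs
  · rfl
  · exact Real.cos_add_two_pi _

lemma re_le_mul_norm_of_cos_arg_le {κ : ℝ} {z : ℂ} (h : Real.cos (arg z) ≤ κ) :
    z.re ≤ κ * ‖z‖ := by
  rw [← norm_mul_cos_arg, mul_comm]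
  exact mul_le_mul_of_nonneg_right h (norm_nonneg z)

lemma eventually_re_le_mul_norm_of_tendsto_argSlit {ι : Type*} {l : Filter ι} {w : ι → ℂ}
    {θ κ : ℝ} (harg : Tendsto (fun n => argSlit (w n)) l (𝓝 θ)) (hκ : Real.cos θ < κ) :
    ∀ᶠ n in l, (w n).re ≤ κ * ‖w n‖ := by
  have hcos : Tendsto (fun n => Real.cos (argSlit (w n))) l (𝓝 (Real.cos θ)) :=
    (Real.continuous_cos.tendsto θ).comp harg
  filter_upwards [hcos.eventually_lt_const hκ] with n hn
  rw [cos_argSlit] at hn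
  exact re_le_mul_norm_of_cos_arg_le hn.le

lemma sqrt_mul_add_norm_le_norm_ofReal_sub {κ : ℝ} (hκ₀ : -1 ≤ κ) (hκ₁ : κ ≤ 1) {z : ℂ}
    (hz : z.re ≤ κ * ‖z‖) {t : ℝ} (ht : 0 ≤ t) :
    √((1 - κ) / 2) * (t + ‖z‖) ≤ ‖(t : ℂ) - z‖ := by
  have hnorm_sq : ‖z‖ ^ 2 = z.re ^ 2 + z.im ^ 2 := by
    rw [Complex.sq_norm, normSq_apply]; ring
  have hdist_sq : ‖(t : ℂ) - z‖ ^ 2 = t ^ 2 - 2 * t * z.re + ‖z‖ ^ 2 := by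
    rw [hnorm_sq, Complex.sq_norm, normSq_apply]; simp; ring
  rw [← pow_le_pow_iff_left₀ (by positivity) (norm_nonneg _) two_ne_zero, mul_pow,
    Real.sq_sqrt (by linarith), hdist_sq]
  -- the difference of the two sides is `(1 + κ) / 2 * (t - ‖z‖) ^ 2 + 2 t (κ ‖z‖ - Re z)`
  nlinarith [mul_le_mul_of_nonneg_left hz ht,
    mul_nonneg (by linarith : (0 : ℝ) ≤ 1 + κ) (sq_nonneg (t - ‖z‖))]

lemma norm_mul_stieltjesKernel_le {c t : ℝ} {z : ℂ} (hc : 0 < c) (ht : 0 < t)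
    (hdist : c * (t + ‖z‖) ≤ ‖(t : ℂ) - z‖) :
    ‖z * stieltjesKernel z t‖ ≤ (1 / t + ‖z‖) / c := by
  have hd : 0 < ‖(t : ℂ) - z‖ := lt_of_lt_of_le (by positivity) hdist
  have hnum : (1 + (t : ℂ) ^ 2) = ((1 + t ^ 2 : ℝ) : ℂ) := by push_cast; ring
  rw [stieltjesKernel, hnum, norm_mul, norm_div, norm_mul, norm_real, norm_real,
    Real.norm_of_nonneg (by positivity), Real.norm_of_nonneg ht.le, mul_div_assoc',
    div_le_div_iff₀ (by positivity) hc, div_add' _ _ _ ht.ne', div_mul_eq_mul_div,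
    le_div_iff₀ ht]
  calc ‖z‖ * (1 + t ^ 2) * c * t ≤ (1 + ‖z‖ * t) * (c * (t + ‖z‖)) * t := by
        have : 0 ≤ c * t * (t + ‖z‖ ^ 2 * t) := by positivity
        nlinarith
    _ ≤ (1 + ‖z‖ * t) * ‖(t : ℂ) - z‖ * t := by gcongr
    _ = _ := by ring

lemma tendsto_mul_stieltjesKernel {ι : Type*} {l : Filter ι} {w : ι → ℂ}
    (hw : Tendsto w l (𝓝 0)) {t : ℝ} (ht : t ≠ 0) :
    Tendsto (fun n => w n * stieltjesKernel (w n) t) l (𝓝 0) := by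
  have hkernel : ContinuousAt (fun z => stieltjesKernel z t) 0 := by
    unfold stieltjesKernel
    have : (t : ℂ) * ((t : ℂ) - 0) ≠ 0 := by simpa using ht
    fun_prop (disch := exact this)
  simpa using hw.mul (hkernel.tendsto.comp hw)

theorem tendsto_mul_integral_stieltjesKernel {ι : Type*} {l : Filter ι}
    [l.IsCountablyGenerated] {σ : Measure ℝ} [IsFiniteMeasure σ] (hpos : ∀ᵐ t ∂σ, 0 < t)
    (hσint : Integrable (fun t : ℝ => 1 / t) σ) {w : ι → ℂ} (hw : Tendsto w l (𝓝 0))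
    {κ : ℝ} (hκ₀ : -1 ≤ κ) (hκ₁ : κ < 1) (hsector : ∀ᶠ n in l, (w n).re ≤ κ * ‖w n‖) :
    Tendsto (fun n => w n * ∫ t, stieltjesKernel (w n) t ∂σ) l (𝓝 0) := by
  set c := √((1 - κ) / 2)
  have hc : 0 < c := Real.sqrt_pos.mpr (by linarith)
  have hsmall : ∀ᶠ n in l, ‖w n‖ ≤ 1 :=
    (by simpa using hw.norm : Tendsto (fun n => ‖w n‖) l (𝓝 0)).eventually_le_const one_pos
  have hbound : ∀ᶠ n in l, ∀ᵐ t ∂σ, ‖w n * stieltjesKernel (w n) t‖ ≤ (1 / t + 1) / c := by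
    filter_upwards [hsector, hsmall] with n hre hle
    filter_upwards [hpos] with t ht
    calc _ ≤ (1 / t + ‖w n‖) / c := norm_mul_stieltjesKernel_le hc ht
            (sqrt_mul_add_norm_le_norm_ofReal_sub hκ₀ hκ₁.le hre ht.le)
      _ ≤ (1 / t + 1) / c := by gcongr
  have hmeas : ∀ n, AEStronglyMeasurable (fun t => w n * stieltjesKernel (w n) t) σ := by
    intro n
    unfold stieltjesKernel
    exact Measurable.aestronglyMeasurable (by fun_prop)
  have hlim := tendsto_integral_filter_of_dominated_convergence _ (.of_forall hmeas) hbound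
    ((hσint.add (integrable_const 1)).div_const c)
    (hpos.mono fun t ht => tendsto_mul_stieltjesKernel hw ht.ne')
  simpa only [integral_const_mul, integral_zero] using hlim

theorem eta_transform_tendsto_zero_general
    (f : ℂ → ℂ) (β : ℝ)
    (σ : Measure ℝ) [IsFiniteMeasure σ]
    (hsupp : σ (Iic (0:ℝ)) = 0)
    (hσint : Integrable (fun t : ℝ => 1 / t) σ)
    (hf : ∀ lam : ℂ, ¬(lam.im = 0 ∧ 0 ≤ lam.re) →
      f lam = β + ∫ t, ((1:ℂ) + (t:ℂ)^2) / ((t:ℂ) * ((t:ℂ) - lam)) ∂σ)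
    (w : ℕ → ℂ) (hw : ∀ n, ¬((w n).im = 0 ∧ 0 ≤ (w n).re))
    (hw0 : Tendsto w atTop (𝓝 0))
    (θ : ℝ) (hθ : 0 < θ ∧ θ < 2 * Real.pi)
    (harg : Tendsto (fun n => argSlit (w n)) atTop (𝓝 θ)) :
    Tendsto (fun n => w n * f (w n)) atTop (𝓝 0) := by
  have hpos : ∀ᵐ t ∂σ, 0 < t := by
    filter_upwards [compl_mem_ae_iff.mpr hsupp] with t ht
    simpa using ht
  have hcos : Real.cos θ < 1 := (Real.cos_le_one θ).lt_of_ne fun h =>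
    hθ.1.ne' ((Real.cos_eq_one_iff_of_lt_of_lt (by linarith) hθ.2).mp h)
  have hsector := eventually_re_le_mul_norm_of_tendsto_argSlit harg
    (by linarith : Real.cos θ < (1 + Real.cos θ) / 2)
  have hintegral := tendsto_mul_integral_stieltjesKernel hpos hσint hw0
    (by linarith [Real.neg_one_le_cos θ]) (by linarith) hsector
  have hlinear : Tendsto (fun n => w n * β) atTop (𝓝 0) := by
    simpa using hw0.mul_const (β : ℂ)
  simpa only [add_zero, hf _ (hw _), mul_add, stieltjesKernel] using hlinear.add hintegral

/-- If f(λ) = β + ∫_{(0,∞)} (1+t²)/(t(t−λ)) dσ(t) on Ω = ℂ \ [0,∞) with β ≥ 0 and σ a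
finite nonzero positive measure on (0,∞) with ∫ 1/t dσ < ∞, η(λ) = λ f(λ), and
wₙ ∈ Ω tends to 0 with arguments converging in (0,2π), then η(wₙ) → 0. -/
theorem eta_transform_tendsto_zero
    (f : ℂ → ℂ) (β : ℝ) (hβ : 0 ≤ β)
    (σ : Measure ℝ) [IsFiniteMeasure σ] (hσ : σ ≠ 0)
    (hsupp : σ (Iic (0:ℝ)) = 0)
    (hσint : Integrable (fun t : ℝ => 1 / t) σ)
    (hf : ∀ lam : ℂ, ¬(lam.im = 0 ∧ 0 ≤ lam.re) →
      f lam = β + ∫ t, ((1:ℂ) + (t:ℂ)^2) / ((t:ℂ) * ((t:ℂ) - lam)) ∂σ)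
    (hint : ∀ lam : ℂ, ¬(lam.im = 0 ∧ 0 ≤ lam.re) →
      Integrable (fun t : ℝ => ((1:ℂ) + (t:ℂ)^2) / ((t:ℂ) * ((t:ℂ) - lam))) σ)
    (w : ℕ → ℂ) (hw : ∀ n, ¬((w n).im = 0 ∧ 0 ≤ (w n).re))
    (hw0 : Tendsto w atTop (𝓝 0))
    (θ : ℝ) (hθ : 0 < θ ∧ θ < 2 * Real.pi)
    (harg : Tendsto (fun n => argSlit (w n)) atTop (𝓝 θ)) :
    Tendsto (fun n => w n * f (w n)) atTop (𝓝 0) :=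
  eta_transform_tendsto_zero_general f β σ hsupp hσint hf w hw hw0 θ hθ harg
end
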